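/- Let R₀ be a commutative Noetherian ring, let R = ⊕_{j≥0} R_j be a commutative graded ring which is a finitely generated graded R₀-algebra whose degree-zero part is R₀, let I = ⊕_{j≥1} R_j be its irrelevant ideal, and let R̂ be the I-adic completion of R. Then for every graded R-module M = ⊕_{j≥0} M_j (not necessarily finitely generated), the canonical R̂-linear map ψ_M : M ⊗_R R̂ → lim_i M/M^i into the graded completion, induced by the natural map M → lim_i M/M^i, is injective. -/

import Mathlib

/-!
Since `R` is Noetherian, the irrelevant ideal `I` is generated by homogeneous elements of degree
at most some `e > 0`, so `R_n ⊆ I^k` once `n ≥ k e`. An element of `M ⊗_R R̂` comes from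
`N ⊗_R R̂` for a submodule `N` spanned by finitely many homogeneous elements of degree at most
`D`; expanding in these generators gives `N ∩ M^{D + k e} ⊆ I^k N`, so an element of the
`I`-adic completion `N̂` that vanishes in every `M/M^i` is zero. Finally `N ⊗_R R̂ → N̂` is
injective because `N` is finite over the Noetherian ring `R`.
-/

set_option linter.unusedSectionVars false

open DirectSum TensorProduct

section

variable (R₀ : Type*) [CommRing R₀]
variable {R : Type*} [CommRing R] [Algebra R₀ R]
variable (𝒜 : ℕ → Submodule R₀ R) [GradedAlgebra 𝒜]
variable {M : Type*} [AddCommGroup M] [Module R₀ M] [Module R M] [IsScalarTower R₀ R M]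
variable (ℳ : ℕ → Submodule R₀ M) [DirectSum.Decomposition ℳ] [SetLike.GradedSMul 𝒜 ℳ]

/-- The filtration of a graded module by grading: `M^i = ⊕_{j ≥ i} M_j`. -/
def gradeFilt (i : ℕ) : Submodule R₀ M :=
  ⨆ j, ⨆ _ : i ≤ j, ℳ j

lemma mem_gradeFilt_of_mem {k i : ℕ} (h : i ≤ k) {m : M} (hm : m ∈ ℳ k) :
    m ∈ gradeFilt R₀ ℳ i :=
  (le_iSup₂_of_le k h le_rfl : ℳ k ≤ gradeFilt R₀ ℳ i) hm

lemma gradeFilt_zero_eq_top : gradeFilt R₀ ℳ 0 = ⊤ := by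
  classical
  rw [eq_top_iff]
  intro m _
  rw [← DirectSum.sum_support_decompose ℳ m]
  exact Submodule.sum_mem _ fun k _ => mem_gradeFilt_of_mem R₀ ℳ (Nat.zero_le k) (SetLike.coe_mem _)

lemma irrelevant_smul_gradeFilt {r : R} (hr : r ∈ (HomogeneousIdeal.irrelevant 𝒜).toIdeal)
    {i : ℕ} {m : M} (hm : m ∈ gradeFilt R₀ ℳ i) :
    r • m ∈ gradeFilt R₀ ℳ (i + 1) := by
  classical
  refine Submodule.iSup_induction (motive := fun m => r • m ∈ gradeFilt R₀ ℳ (i + 1)) _ hm ?_ ?_ ?_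
  · intro j x hx
    by_cases hij : i ≤ j
    · rw [iSup_pos hij] at hx
      have hsum : r • x = ∑ d ∈ (DirectSum.decompose 𝒜 r).support,
          ((DirectSum.decompose 𝒜 r d : R) • x) := by
        conv_lhs => rw [← DirectSum.sum_support_decompose 𝒜 r]
        rw [Finset.sum_smul]
      rw [hsum]
      refine Submodule.sum_mem _ fun d hd => ?_
      have hd0 : d ≠ 0 := by
        intro h0
        subst h0
        have hz : (DirectSum.decompose 𝒜 r 0 : R) = 0 := by
          have := (HomogeneousIdeal.mem_irrelevant_iff 𝒜 r).mp hr
          rwa [GradedRing.proj_apply] at this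
        exact (DFinsupp.mem_support_iff.mp hd) (by exact_mod_cast Subtype.ext hz)
      have hmem : (DirectSum.decompose 𝒜 r d : R) • x ∈ ℳ (d + j) := by
        have := SetLike.GradedSMul.smul_mem (A := 𝒜) (B := ℳ)
          (SetLike.coe_mem (DirectSum.decompose 𝒜 r d)) hx
        simpa [vadd_eq_add] using this
      exact mem_gradeFilt_of_mem R₀ ℳ (by omega) hmem
    · rw [iSup_neg hij] at hx
      simp only [Submodule.mem_bot] at hx
      subst hx
      show r • (0 : M) ∈ gradeFilt R₀ ℳ (i + 1)
      rw [smul_zero]; exact Submodule.zero_mem _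
  · show r • (0 : M) ∈ gradeFilt R₀ ℳ (i + 1)
    rw [smul_zero]; exact Submodule.zero_mem _
  · intro x y hx hy
    show r • (x + y) ∈ gradeFilt R₀ ℳ (i + 1)
    rw [smul_add]; exact Submodule.add_mem _ hx hy

lemma pow_irrelevant_smul_le_gradeFilt (i : ℕ) :
    ∀ x ∈ ((HomogeneousIdeal.irrelevant 𝒜).toIdeal ^ i • (⊤ : Submodule R M)),
      x ∈ gradeFilt R₀ ℳ i := by
  induction i with
  | zero =>
    intro x _
    rw [gradeFilt_zero_eq_top R₀ ℳ]
    exact Submodule.mem_top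
  | succ i ih =>
    intro x hx
    rw [pow_succ', mul_smul] at hx
    exact Submodule.smul_induction_on hx
      (fun r hr y hy => irrelevant_smul_gradeFilt R₀ 𝒜 ℳ hr (ih y hy))
      (fun a b ha hb => Submodule.add_mem _ ha hb)

lemma le_comap_id_of_le {p q : Submodule R₀ M} (h : p ≤ q) :
    p ≤ q.comap (LinearMap.id : M →ₗ[R₀] M) := by
  simpa [Submodule.comap_id] using h

variable (M) in
/-- The canonical map `ψ_M : M ⊗_R R̂ → lim_i M/M^i`, where `R̂` is the `I`-adic completion
of `R` for the irrelevant ideal `I`.  It is the composite of the canonical map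
`M ⊗_R R̂ → \hat{M}` (to the `I`-adic completion of `M`) with the canonical map
`θ_M : \hat{M} → lim_i M/M^i` induced by the containments `I^i·M ⊆ M^i`; in particular it
is induced by the natural map `M → lim_i M/M^i`. -/
noncomputable def psiMap :
    (M ⊗[R] AdicCompletion (HomogeneousIdeal.irrelevant 𝒜).toIdeal R) →
      ∀ i, M ⧸ gradeFilt R₀ ℳ i :=
  fun x i =>
    Submodule.mapQ _ _ LinearMap.id
      (le_comap_id_of_le R₀ fun m hm => pow_irrelevant_smul_le_gradeFilt R₀ 𝒜 ℳ i m hm)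
      ((Submodule.Quotient.restrictScalarsEquiv R₀
          ((HomogeneousIdeal.irrelevant 𝒜).toIdeal ^ i • (⊤ : Submodule R M))).symm
        (AdicCompletion.eval (HomogeneousIdeal.irrelevant 𝒜).toIdeal M i
          (AdicCompletion.ofTensorProduct (HomogeneousIdeal.irrelevant 𝒜).toIdeal M
            (TensorProduct.comm R M
              (AdicCompletion (HomogeneousIdeal.irrelevant 𝒜).toIdeal R) x))))

end

namespace AdicCompletion

variable {R : Type*} [CommRing R] (I : Ideal R)

/-- `ofTensorProduct_bijective_of_finite_of_isNoetherian` needs `M` in the universe of `R`;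
pass through the presentation `Rⁿ ⧸ K ≃ M` to drop that restriction. -/
theorem ofTensorProduct_bijective_of_finite [IsNoetherianRing R] (M : Type*) [AddCommGroup M]
    [Module R M] [Module.Finite R M] : Function.Bijective (ofTensorProduct I M) := by
  obtain ⟨n, p, hp⟩ := Module.Finite.exists_fin' R M
  let e := p.quotKerEquivOfSurjective hp
  let e' :=
    AlgebraTensorModule.congr (LinearEquiv.refl (AdicCompletion I R) (AdicCompletion I R)) e
  have hcomp : Function.Bijective (ofTensorProduct I M ∘ₗ e'.toLinearMap) := by
    rw [show ofTensorProduct I M ∘ₗ e'.toLinearMap = map I e.toLinearMap ∘ₗ ofTensorProduct I _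
      from (ofTensorProduct_naturality I e.toLinearMap).symm]
    exact (congr I e).bijective.comp (ofTensorProduct_bijective_of_finite_of_isNoetherian I _)
  exact (Function.Bijective.of_comp_iff _ e'.bijective).mp hcomp

theorem eq_zero_of_forall_exists_eval_eq_mk {M : Type*} [AddCommGroup M] [Module R M]
    (x : AdicCompletion I M)
    (h : ∀ k, ∃ n, k ≤ n ∧
      ∃ v ∈ (I ^ k • ⊤ : Submodule R M), eval I M n x = Submodule.Quotient.mk v) :
    x = 0 := by
  refine AdicCompletion.ext fun k => ?_
  obtain ⟨n, hkn, v, hv, hxv⟩ := h k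
  rw [← transitionMap_comp_eval_apply I M hkn, ← eval_apply, hxv, val_zero_apply]
  exact (Submodule.Quotient.mk_eq_zero _).mpr hv

end AdicCompletion

section Decomposition

variable {R₀ M : Type*} [CommRing R₀] [AddCommGroup M] [Module R₀ M]
variable (ℳ : ℕ → Submodule R₀ M) [DirectSum.Decomposition ℳ]

theorem exists_homogeneous_finset_subset_span (S : Type*) [Semiring S] [Module S M]
    (t : Finset M) :
    ∃ (s : Finset M) (D : ℕ), (∀ g ∈ s, ∃ m ∈ t, ∃ j ≤ D, g = decompose ℳ m j) ∧
      (t : Set M) ⊆ Submodule.span S (s : Set M) := by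
  classical
  let D := t.sup fun m => (decompose ℳ m).support.sup id
  refine ⟨t.biUnion fun m => (decompose ℳ m).support.image fun j => (decompose ℳ m j : M), D,
    fun g hg => ?_, fun m hm => ?_⟩
  · simp only [Finset.mem_biUnion, Finset.mem_image] at hg
    obtain ⟨m, hm, j, hj, rfl⟩ := hg
    exact ⟨m, hm, j, (Finset.le_sup (f := id) hj).trans
      (Finset.le_sup (f := fun m => (decompose ℳ m).support.sup id) hm), rfl⟩
  · rw [← DirectSum.sum_support_decompose ℳ m]
    refine Submodule.sum_mem _ fun j hj => Submodule.subset_span ?_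
    simp only [Finset.coe_biUnion, Finset.coe_image, Set.mem_iUnion, Set.mem_image,
      Finset.mem_coe]
    exact ⟨m, hm, j, hj, rfl⟩

theorem decompose_eq_zero_of_mem_gradeFilt {i j : ℕ} (hji : j < i) {m : M}
    (hm : m ∈ gradeFilt R₀ ℳ i) : decompose ℳ m j = 0 := by
  refine Submodule.iSup_induction (motive := fun m => decompose ℳ m j = 0) _ hm
    (fun k x hx => ?_) (by simp) fun x y hx hy => ?_
  · by_cases hik : i ≤ k
    · rw [iSup_pos hik] at hx
      exact Subtype.ext (DirectSum.decompose_of_mem_ne ℳ hx (by omega))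
    · rw [iSup_neg hik, Submodule.mem_bot] at hx
      simp [hx]
  · rw [decompose_add, DirectSum.add_apply, hx, hy, add_zero]

end Decomposition

section GradedModule

open HomogeneousIdeal

variable {R₀ R : Type*} [CommRing R₀] [CommRing R] [Algebra R₀ R]
variable (𝒜 : ℕ → Submodule R₀ R) [GradedAlgebra 𝒜]

theorem Ideal.IsHomogeneous.exists_homogeneous_finset_span_eq {J : Ideal R}
    (hJ : J.IsHomogeneous 𝒜) (hfg : J.FG) :
    ∃ (T : Finset R) (e : ℕ), (∀ g ∈ T, ∃ d ≤ e, g ∈ 𝒜 d) ∧ Ideal.span T = J := by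
  obtain ⟨S, rfl⟩ := hfg
  obtain ⟨T, e, hT, hST⟩ := exists_homogeneous_finset_subset_span 𝒜 R S
  refine ⟨T, e, fun g hg => ?_, le_antisymm (Ideal.span_le.mpr fun g hg => ?_)
    (Ideal.span_le.mpr hST)⟩
  · obtain ⟨m, -, j, hj, rfl⟩ := hT g hg
    exact ⟨j, hj, SetLike.coe_mem _⟩
  · obtain ⟨m, hm, j, -, rfl⟩ := hT g hg
    exact hJ j (Ideal.subset_span hm)

theorem mem_irrelevant_pow_of_mem_of_span_eq {T : Finset R} {e : ℕ} (he : 0 < e)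
    (hT : ∀ g ∈ T, ∃ d ≤ e, g ∈ 𝒜 d) (hspan : Ideal.span T = (𝒜₊).toIdeal) :
    ∀ {k n : ℕ}, k * e ≤ n → ∀ {r : R}, r ∈ 𝒜 n → r ∈ (𝒜₊).toIdeal ^ k := by
  intro k
  induction k with
  | zero => simp
  | succ k ih =>
    intro n hn r hr
    have hrI : r ∈ Ideal.span T := hspan ▸ mem_irrelevant_of_mem 𝒜 (by nlinarith) hr
    obtain ⟨f, -, hf⟩ := Submodule.mem_span_finset.mp hrI
    rw [← DirectSum.decompose_of_mem_same 𝒜 hr, ← hf, DirectSum.decompose_sum,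
      DFinsupp.finsetSum_apply, AddSubmonoidClass.coe_finsetSum]
    refine Ideal.sum_mem _ fun g hg => ?_
    obtain ⟨d, hde, hgd⟩ := hT g hg
    rw [smul_eq_mul, DirectSum.coe_decompose_mul_of_right_mem_of_le 𝒜 hgd (by nlinarith), pow_succ]
    exact Ideal.mul_mem_mul (ih (by rw [Nat.succ_mul] at hn; omega) (SetLike.coe_mem _))
      (hspan ▸ Ideal.subset_span hg)

theorem exists_grade_subset_irrelevant_pow (hfg : (𝒜₊).toIdeal.FG) :
    ∃ e, 0 < e ∧ ∀ {k n : ℕ}, k * e ≤ n → ∀ {r : R}, r ∈ 𝒜 n → r ∈ (𝒜₊).toIdeal ^ k := by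
  obtain ⟨T, e, hT, hspan⟩ := (𝒜₊).isHomogeneous.exists_homogeneous_finset_span_eq 𝒜 hfg
  exact ⟨e + 1, e.succ_pos, mem_irrelevant_pow_of_mem_of_span_eq 𝒜 e.succ_pos
    (fun g hg => (hT g hg).imp fun _ h => ⟨h.1.trans e.le_succ, h.2⟩) hspan⟩

variable {M : Type*} [AddCommGroup M] [Module R₀ M] [Module R M]
variable (ℳ : ℕ → Submodule R₀ M) [DirectSum.Decomposition ℳ] [SetLike.GradedSMul 𝒜 ℳ]

theorem coe_decompose_smul_of_mem_of_le (f : R) {g : M} {d j : ℕ} (hg : g ∈ ℳ d) (hdj : d ≤ j) :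
    (decompose ℳ (f • g) j : M) = (decompose 𝒜 f (j - d) : R) • g := by
  induction f using DirectSum.Decomposition.inductionOn 𝒜 with
  | zero => simp
  | add f f' hf hf' =>
    rw [add_smul, decompose_add, DirectSum.add_apply, Submodule.coe_add, hf, hf', decompose_add,
      DirectSum.add_apply, Submodule.coe_add, add_smul]
  | @homogeneous t f =>
    have hfg : (f : R) • g ∈ ℳ (t + d) := SetLike.GradedSMul.smul_mem f.2 hg
    by_cases htj : t + d = j
    · have hf : (f : R) ∈ 𝒜 (j - d) := by rw [← htj, Nat.add_sub_cancel]; exact f.2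
      rw [DirectSum.decompose_of_mem_same ℳ (htj ▸ hfg), DirectSum.decompose_of_mem_same 𝒜 hf]
    · rw [DirectSum.decompose_of_mem_ne ℳ hfg htj, DirectSum.decompose_of_mem_ne 𝒜 f.2 (by omega),
        zero_smul]

variable {𝒜 ℳ} in
theorem decompose_mem_pow_smul_span {s : Finset M} {D e : ℕ} (hs : ∀ g ∈ s, ∃ d ≤ D, g ∈ ℳ d)
    (hpow : ∀ {k n : ℕ}, k * e ≤ n → ∀ {r : R}, r ∈ 𝒜 n → r ∈ (𝒜₊).toIdeal ^ k)
    {m : M} (hm : m ∈ Submodule.span R (s : Set M)) {k j : ℕ} (hj : D + k * e ≤ j) :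
    (decompose ℳ m j : M) ∈ (𝒜₊).toIdeal ^ k • Submodule.span R (s : Set M) := by
  obtain ⟨f, -, rfl⟩ := Submodule.mem_span_finset.mp hm
  rw [DirectSum.decompose_sum, DFinsupp.finsetSum_apply, AddSubmonoidClass.coe_finsetSum]
  refine Submodule.sum_mem _ fun g hg => ?_
  obtain ⟨d, hdD, hgd⟩ := hs g hg
  rw [coe_decompose_smul_of_mem_of_le 𝒜 ℳ (f g) hgd (by omega)]
  exact Submodule.smul_mem_smul (hpow (by omega) (SetLike.coe_mem _)) (Submodule.subset_span hg)

variable {𝒜 ℳ} in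
theorem mem_pow_smul_span_of_mem_gradeFilt {s : Finset M} {D e : ℕ}
    (hs : ∀ g ∈ s, ∃ d ≤ D, g ∈ ℳ d)
    (hpow : ∀ {k n : ℕ}, k * e ≤ n → ∀ {r : R}, r ∈ 𝒜 n → r ∈ (𝒜₊).toIdeal ^ k)
    {m : M} (hm : m ∈ Submodule.span R (s : Set M)) {k : ℕ}
    (hfilt : m ∈ gradeFilt R₀ ℳ (D + k * e)) :
    m ∈ (𝒜₊).toIdeal ^ k • Submodule.span R (s : Set M) := by
  classical
  rw [← DirectSum.sum_support_decompose ℳ m]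
  refine Submodule.sum_mem _ fun j _ => ?_
  by_cases hj : D + k * e ≤ j
  · exact decompose_mem_pow_smul_span hs hpow hm hj
  · rw [decompose_eq_zero_of_mem_gradeFilt ℳ (by omega) hfilt, ZeroMemClass.coe_zero]
    exact Submodule.zero_mem _

end GradedModule

section FiniteReduction

variable {R₀ R M : Type*} [CommRing R₀] [CommRing R] [AddCommGroup M] [Module R₀ M] [Module R M]
variable {ℳ : ℕ → Submodule R₀ M} [DirectSum.Decomposition ℳ]

variable (ℳ) in
theorem exists_homogeneous_finset_eq_rTensor_subtype {P : Type*} [AddCommGroup P] [Module R P]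
    (x : M ⊗[R] P) :
    ∃ (s : Finset M) (D : ℕ), (∀ g ∈ s, ∃ d ≤ D, g ∈ ℳ d) ∧
      ∃ y : Submodule.span R (s : Set M) ⊗[R] P,
        (Submodule.span R (s : Set M)).subtype.rTensor P y = x := by
  obtain ⟨J, ⟨t, rfl⟩, y, rfl⟩ := Submodule.exists_fg_le_eq_rTensor_subtype x
  obtain ⟨s, D, hs, hts⟩ := exists_homogeneous_finset_subset_span ℳ R t
  have hle : Submodule.span R (t : Set M) ≤ Submodule.span R s := Submodule.span_le.mpr hts
  refine ⟨s, D, fun g hg => ?_, (Submodule.inclusion hle).rTensor P y, ?_⟩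
  · obtain ⟨m, -, j, hj, rfl⟩ := hs g hg
    exact ⟨j, hj, SetLike.coe_mem _⟩
  · rw [← LinearMap.rTensor_comp_apply]
    rfl

end FiniteReduction

section PsiMap

open HomogeneousIdeal AdicCompletion

variable (R₀ : Type*) [CommRing R₀]
variable {R : Type*} [CommRing R] [Algebra R₀ R]
variable (𝒜 : ℕ → Submodule R₀ R) [GradedAlgebra 𝒜]
variable (M : Type*) [AddCommGroup M] [Module R₀ M] [Module R M] [IsScalarTower R₀ R M]
variable (ℳ : ℕ → Submodule R₀ M) [DirectSum.Decomposition ℳ] [SetLike.GradedSMul 𝒜 ℳ]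

theorem psiMap_sub (x y : M ⊗[R] AdicCompletion (𝒜₊).toIdeal R) :
    psiMap R₀ 𝒜 M ℳ (x - y) = psiMap R₀ 𝒜 M ℳ x - psiMap R₀ 𝒜 M ℳ y := by
  funext i
  simp only [psiMap, map_sub]
  rfl

variable {M} in
theorem psiMap_rTensor_subtype_apply (N : Submodule R M)
    (y : N ⊗[R] AdicCompletion (𝒜₊).toIdeal R) {i : ℕ} {v : N}
    (hv : eval (𝒜₊).toIdeal N i (ofTensorProduct (𝒜₊).toIdeal N (TensorProduct.comm R _ _ y)) =
      Submodule.Quotient.mk v) :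
    psiMap R₀ 𝒜 M ℳ (N.subtype.rTensor _ y) i = Submodule.Quotient.mk (v : M) := by
  have hnat : ofTensorProduct (𝒜₊).toIdeal M (N.subtype.lTensor _ (TensorProduct.comm R _ _ y)) =
      map (𝒜₊).toIdeal N.subtype (ofTensorProduct (𝒜₊).toIdeal N (TensorProduct.comm R _ _ y)) :=
    (LinearMap.congr_fun (ofTensorProduct_naturality (𝒜₊).toIdeal N.subtype) _).symm
  have hM : eval (𝒜₊).toIdeal M i (ofTensorProduct (𝒜₊).toIdeal M
      (TensorProduct.comm R _ _ (N.subtype.rTensor _ y))) = Submodule.Quotient.mk (v : M) := by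
    rw [← LinearMap.lTensor_comm, hnat, eval_apply, map_val_apply, ← eval_apply, hv]
    rfl
  simp only [psiMap]
  rw [hM, Submodule.Quotient.restrictScalarsEquiv_symm_mk, Submodule.mapQ_apply, LinearMap.id_apply]

theorem eq_zero_of_psiMap_eq_zero [IsNoetherianRing R] {w : M ⊗[R] AdicCompletion (𝒜₊).toIdeal R}
    (hw : psiMap R₀ 𝒜 M ℳ w = 0) : w = 0 := by
  obtain ⟨e, he, hpow⟩ := exists_grade_subset_irrelevant_pow 𝒜 (IsNoetherian.noetherian _)
  obtain ⟨s, D, hs, hw'⟩ := exists_homogeneous_finset_eq_rTensor_subtype ℳ w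
  set N := Submodule.span R (s : Set M)
  obtain ⟨y, rfl⟩ := hw'
  set ŷ := ofTensorProduct (𝒜₊).toIdeal N (TensorProduct.comm R _ _ y)
  have hŷ : ŷ = 0 := by
    refine eq_zero_of_forall_exists_eval_eq_mk _ _ fun k => ⟨D + k * e, by nlinarith, ?_⟩
    obtain ⟨v, hv⟩ := Submodule.Quotient.mk_surjective _ (eval _ N (D + k * e) ŷ)
    have hvM : (v : M) ∈ gradeFilt R₀ ℳ (D + k * e) := by
      rw [← Submodule.Quotient.mk_eq_zero, ← psiMap_rTensor_subtype_apply R₀ 𝒜 ℳ N y hv.symm, hw]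
      rfl
    exact ⟨v, (Submodule.mem_smul_top_iff _ _ _).mpr
      (mem_pow_smul_span_of_mem_gradeFilt hs hpow v.2 hvM), hv.symm⟩
  have hy : TensorProduct.comm R _ _ y = 0 :=
    (ofTensorProduct_bijective_of_finite _ N).injective (hŷ.trans (_root_.map_zero _).symm)
  rw [(TensorProduct.comm R _ _).map_eq_zero_iff.mp hy, _root_.map_zero]

end PsiMap

theorem weak_completion_to_graded_completion_injective_general
    (R₀ : Type*) [CommRing R₀] [IsNoetherianRing R₀]
    (R : Type*) [CommRing R] [Algebra R₀ R]
    (𝒜 : ℕ → Submodule R₀ R) [GradedAlgebra 𝒜]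
    (hfg : Algebra.FiniteType R₀ R)
    (M : Type*) [AddCommGroup M] [Module R₀ M] [Module R M] [IsScalarTower R₀ R M]
    (ℳ : ℕ → Submodule R₀ M) [DirectSum.Decomposition ℳ] [SetLike.GradedSMul 𝒜 ℳ] :
    Function.Injective (psiMap R₀ 𝒜 M ℳ) := by
  have : IsNoetherianRing R := Algebra.FiniteType.isNoetherianRing R₀ R
  intro x y hxy
  rw [← sub_eq_zero]
  exact eq_zero_of_psiMap_eq_zero R₀ 𝒜 M ℳ (by rw [psiMap_sub, hxy, sub_self])

/-- **Proposition 4.1(iv) of the paper.**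
Let `R₀` be a commutative Noetherian ring, `R = ⊕_j R_j` a commutative graded ring which is
a finitely generated graded `R₀`-algebra with degree-zero part `R₀`, `I = ⊕_{j≥1} R_j` the
irrelevant ideal, and `R̂` the `I`-adic completion of `R`.  Then for every graded
`R`-module `M = ⊕_j M_j` (not necessarily finitely generated), the canonical map
`ψ_M : M ⊗_R R̂ → lim_i M/M^i` into the graded completion, induced by the natural map
`M → lim_i M/M^i`, is injective. -/
theorem weak_completion_to_graded_completion_injective
    (R₀ : Type*) [CommRing R₀] [IsNoetherianRing R₀]
    (R : Type*) [CommRing R] [Algebra R₀ R]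
    (𝒜 : ℕ → Submodule R₀ R) [GradedAlgebra 𝒜]
    (hfg : Algebra.FiniteType R₀ R) (h0 : 𝒜 0 = (1 : Submodule R₀ R))
    (M : Type*) [AddCommGroup M] [Module R₀ M] [Module R M] [IsScalarTower R₀ R M]
    (ℳ : ℕ → Submodule R₀ M) [DirectSum.Decomposition ℳ] [SetLike.GradedSMul 𝒜 ℳ] :
    Function.Injective (psiMap R₀ 𝒜 M ℳ) :=
  weak_completion_to_graded_completion_injective_general R₀ R 𝒜 hfg M ℳ
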